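/- (Progress for pure computations) If ⊢ c : A ! ∅ is derivable for a closed core Eff computation c, then either there exists c' with c ⇝ c', or c is of the form val e for some expression e with ⊢ e : A; in particular, a terminating closed computation of type A ! ∅ returns a value of type A and calls no operations. -/

import Mathlib

namespace CoreEff

/-- Names for effects, instances and operation symbols. -/
structure Sig where
  Effect : Type
  Inst : Type
  Op : Type

/- Pure types and dirty types of core Eff.  A region is a finite set of
instances, a dirt a finite set of operations `ι#op`. -/
mutual
inductive PType (σ : Sig) : Type
  | bool : PType σ
  | nat : PType σ
  | unit : PType σ
  | empty : PType σ
  | fn : PType σ → DType σ → PType σ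
  | eff : σ.Effect → Finset σ.Inst → PType σ
  | hand : DType σ → DType σ → PType σ
inductive DType (σ : Sig) : Type
  | bang : PType σ → Finset (σ.Inst × σ.Op) → DType σ
end

/-- Assignment of effects to instances and operation symbols, and of
parameter/result types to operation symbols (the signatures `Σ_E`). -/
structure OpSig (σ : Sig) where
  instOf : σ.Inst → σ.Effect
  opOf : σ.Op → σ.Effect
  par : σ.Op → PType σ
  res : σ.Op → PType σ

/- Syntax of core Eff, with de Bruijn indices.
In an operation case `e#op x k ↦ c`, the body `c` binds `x` as index 1 and
`k` as index 0.  In `letrec f x = c₁ in c₂`, `c₁` binds `f` as 1 and `x` as 0,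
and `c₂` binds `f` as 0. -/
mutual
inductive Expr (σ : Sig) : Type
  | var : Nat → Expr σ
  | tt : Expr σ
  | ff : Expr σ
  | zero : Expr σ
  | succ : Expr σ → Expr σ
  | unit : Expr σ
  | fn : PType σ → Comp σ → Expr σ
  | inst : σ.Inst → Expr σ
  | handler : PType σ → Comp σ → OpCases σ → Expr σ
inductive OpCases (σ : Sig) : Type
  | nil : DType σ → OpCases σ
  | cons : Expr σ → σ.Op → Comp σ → OpCases σ → OpCases σ
inductive Comp (σ : Sig) : Type
  | ret : Expr σ → Comp σ
  | call : Expr σ → σ.Op → Expr σ → Comp σ → Comp σ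
  | handle : Expr σ → Comp σ → Comp σ
  | ite : Expr σ → Comp σ → Comp σ → Comp σ
  | case : Expr σ → Comp σ → Comp σ → Comp σ
  | absurd : DType σ → Expr σ → Comp σ
  | app : Expr σ → Expr σ → Comp σ
  | letin : Comp σ → Comp σ → Comp σ
  | letrec : PType σ → DType σ → Comp σ → Comp σ → Comp σ
end

/-- Pushing a renaming under one binder. -/
def liftRen (ξ : Nat → Nat) : Nat → Nat
  | 0 => 0
  | n + 1 => ξ n + 1

variable {σ : Sig}

mutual
def renameE (ξ : Nat → Nat) : Expr σ → Expr σ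
  | .var n => .var (ξ n)
  | .tt => .tt
  | .ff => .ff
  | .zero => .zero
  | .succ e => .succ (renameE ξ e)
  | .unit => .unit
  | .fn A c => .fn A (renameC (liftRen ξ) c)
  | .inst ι => .inst ι
  | .handler A cv ocs => .handler A (renameC (liftRen ξ) cv) (renameO ξ ocs)
def renameO (ξ : Nat → Nat) : OpCases σ → OpCases σ
  | .nil C => .nil C
  | .cons e op c ocs =>
      .cons (renameE ξ e) op (renameC (liftRen (liftRen ξ)) c) (renameO ξ ocs)
def renameC (ξ : Nat → Nat) : Comp σ → Comp σ
  | .ret e => .ret (renameE ξ e)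
  | .call e1 op e2 c => .call (renameE ξ e1) op (renameE ξ e2) (renameC (liftRen ξ) c)
  | .handle e c => .handle (renameE ξ e) (renameC ξ c)
  | .ite e c1 c2 => .ite (renameE ξ e) (renameC ξ c1) (renameC ξ c2)
  | .case e c1 c2 => .case (renameE ξ e) (renameC ξ c1) (renameC (liftRen ξ) c2)
  | .absurd C e => .absurd C (renameE ξ e)
  | .app e1 e2 => .app (renameE ξ e1) (renameE ξ e2)
  | .letin c1 c2 => .letin (renameC ξ c1) (renameC (liftRen ξ) c2)
  | .letrec A C c1 c2 =>
      .letrec A C (renameC (liftRen (liftRen ξ)) c1) (renameC (liftRen ξ) c2)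
end

/-- Weakening of an expression by one variable. -/
def shiftE (e : Expr σ) : Expr σ := renameE Nat.succ e

/-- Pushing a substitution under one binder. -/
def liftSub (s : Nat → Expr σ) : Nat → Expr σ
  | 0 => .var 0
  | n + 1 => shiftE (s n)

mutual
def substE (s : Nat → Expr σ) : Expr σ → Expr σ
  | .var n => s n
  | .tt => .tt
  | .ff => .ff
  | .zero => .zero
  | .succ e => .succ (substE s e)
  | .unit => .unit
  | .fn A c => .fn A (substC (liftSub s) c)
  | .inst ι => .inst ι
  | .handler A cv ocs => .handler A (substC (liftSub s) cv) (substO s ocs)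
def substO (s : Nat → Expr σ) : OpCases σ → OpCases σ
  | .nil C => .nil C
  | .cons e op c ocs =>
      .cons (substE s e) op (substC (liftSub (liftSub s)) c) (substO s ocs)
def substC (s : Nat → Expr σ) : Comp σ → Comp σ
  | .ret e => .ret (substE s e)
  | .call e1 op e2 c => .call (substE s e1) op (substE s e2) (substC (liftSub s) c)
  | .handle e c => .handle (substE s e) (substC s c)
  | .ite e c1 c2 => .ite (substE s e) (substC s c1) (substC s c2)
  | .case e c1 c2 => .case (substE s e) (substC s c1) (substC (liftSub s) c2)
  | .absurd C e => .absurd C (substE s e)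
  | .app e1 e2 => .app (substE s e1) (substE s e2)
  | .letin c1 c2 => .letin (substC s c1) (substC (liftSub s) c2)
  | .letrec A C c1 c2 =>
      .letrec A C (substC (liftSub (liftSub s)) c1) (substC (liftSub s) c2)
end

/-- Substituting an expression for the last-bound variable. -/
def sub1 (e : Expr σ) : Nat → Expr σ
  | 0 => e
  | n + 1 => .var n

/-- Substituting for the two last-bound variables (index 1 gets `e1`, index 0 gets `e0`). -/
def sub2 (e1 e0 : Expr σ) : Nat → Expr σ
  | 0 => e0
  | 1 => e1
  | n + 2 => .var n

def subst0E (e : Expr σ) (e' : Expr σ) : Expr σ := substE (sub1 e) e'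
def subst0C (e : Expr σ) (c : Comp σ) : Comp σ := substC (sub1 e) c
def subst2C (e1 e0 : Expr σ) (c : Comp σ) : Comp σ := substC (sub2 e1 e0) c

/-- Swap of the two last-bound variables. -/
def swap01 : Nat → Nat
  | 0 => 1
  | 1 => 0
  | n + 2 => n + 2

/-- The unfolding `fun x ↦ let rec f x = c₁ in c₁` of a recursive definition. -/
def recUnfold (A : PType σ) (C : DType σ) (c1 : Comp σ) : Expr σ :=
  .fn A (.letrec A C (renameC (liftRen (liftRen Nat.succ)) c1) (renameC swap01 c1))

/-- `Dispatch ocs ι op e κ c` means `c = ocs_{ι#op}(e, κ)`: the first operation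
case of `ocs` matching `ι#op` is selected (substituting `e` for the parameter
and `κ` for the continuation) and the call is re-raised, with continuation
`(y. κ y)`, if no case matches. -/
inductive Dispatch : OpCases σ → σ.Inst → σ.Op → Expr σ → Expr σ → Comp σ → Prop
  | nil {C ι op e κ} :
      Dispatch (.nil C) ι op e κ (.call (.inst ι) op e (.app (shiftE κ) (.var 0)))
  | found {ι op c ocs e κ} :
      Dispatch (.cons (.inst ι) op c ocs) ι op e κ (subst2C e κ c)
  | skip {e' op' c ocs ι op e κ c'} :
      (Expr.inst ι ≠ e' ∨ op ≠ op') →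
      Dispatch ocs ι op e κ c' →
      Dispatch (.cons e' op' c ocs) ι op e κ c'

/-- Small-step operational semantics `c ⇝ c'` of core Eff. -/
inductive Step (Ω : OpSig σ) : Comp σ → Comp σ → Prop
  | iteTrue {c1 c2} : Step Ω (.ite .tt c1 c2) c1
  | iteFalse {c1 c2} : Step Ω (.ite .ff c1 c2) c2
  | caseZero {c1 c2} : Step Ω (.case .zero c1 c2) c1
  | caseSucc {e c1 c2} : Step Ω (.case (.succ e) c1 c2) (subst0C e c2)
  | app {A c e} : Step Ω (.app (.fn A c) e) (subst0C e c)
  | letCong {c1 c1' c2} : Step Ω c1 c1' → Step Ω (.letin c1 c2) (.letin c1' c2)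
  | letVal {e c2} : Step Ω (.letin (.ret e) c2) (subst0C e c2)
  | letOp {ι op e c1 c2} :
      Step Ω (.letin (.call (.inst ι) op e c1) c2)
        (.call (.inst ι) op e (.letin c1 (renameC (liftRen Nat.succ) c2)))
  | letrec {A C c1 c2} : Step Ω (.letrec A C c1 c2) (subst0C (recUnfold A C c1) c2)
  | handleCong {h c c'} : Step Ω c c' → Step Ω (.handle h c) (.handle h c')
  | handleVal {A cv ocs e} :
      Step Ω (.handle (.handler A cv ocs) (.ret e)) (subst0C e cv)
  | handleOp {A cv ocs ι op e c c'} :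
      Dispatch ocs ι op e
        (.fn (Ω.res op) (.handle (shiftE (.handler A cv ocs)) c)) c' →
      Step Ω (.handle (.handler A cv ocs) (.call (.inst ι) op e c)) c'

/-- Big-step operational semantics `c ⇓ r` of core Eff; results are `val e`
and operation calls `ι#op e (y.c)`. -/
inductive Big (Ω : OpSig σ) : Comp σ → Comp σ → Prop
  | ret {e} : Big Ω (.ret e) (.ret e)
  | call {ι op e c} : Big Ω (.call (.inst ι) op e c) (.call (.inst ι) op e c)
  | iteTrue {c1 c2 r} : Big Ω c1 r → Big Ω (.ite .tt c1 c2) r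
  | iteFalse {c1 c2 r} : Big Ω c2 r → Big Ω (.ite .ff c1 c2) r
  | caseZero {c1 c2 r} : Big Ω c1 r → Big Ω (.case .zero c1 c2) r
  | caseSucc {e c1 c2 r} : Big Ω (subst0C e c2) r → Big Ω (.case (.succ e) c1 c2) r
  | app {A c e r} : Big Ω (subst0C e c) r → Big Ω (.app (.fn A c) e) r
  | letVal {c1 c2 e r} : Big Ω c1 (.ret e) → Big Ω (subst0C e c2) r →
      Big Ω (.letin c1 c2) r
  | letOp {c1 c2 ι op e c} : Big Ω c1 (.call (.inst ι) op e c) →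
      Big Ω (.letin c1 c2)
        (.call (.inst ι) op e (.letin c (renameC (liftRen Nat.succ) c2)))
  | letrec {A C c1 c2 r} : Big Ω (subst0C (recUnfold A C c1) c2) r →
      Big Ω (.letrec A C c1 c2) r
  | handleVal {A cv ocs c e r} : Big Ω c (.ret e) → Big Ω (subst0C e cv) r →
      Big Ω (.handle (.handler A cv ocs) c) r
  | handleOp {A cv ocs c ι op e c' c'' r} :
      Big Ω c (.call (.inst ι) op e c') →
      Dispatch ocs ι op e
        (.fn (Ω.res op) (.handle (shiftE (.handler A cv ocs)) c')) c'' →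
      Big Ω c'' r →
      Big Ω (.handle (.handler A cv ocs) c) r

/-- `c ⇝* r`: iterated small steps ending in a result. -/
inductive StarStep (Ω : OpSig σ) : Comp σ → Comp σ → Prop
  | ret {e} : StarStep Ω (.ret e) (.ret e)
  | call {ι op e c} : StarStep Ω (.call (.inst ι) op e c) (.call (.inst ι) op e c)
  | step {c c' r} : Step Ω c c' → StarStep Ω c' r → StarStep Ω c r

/- Structural subtyping of pure and dirty types. -/
mutual
inductive SubP (σ : Sig) : PType σ → PType σ → Prop
  | bool : SubP σ .bool .bool
  | nat : SubP σ .nat .nat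
  | unit : SubP σ .unit .unit
  | empty : SubP σ .empty .empty
  | fn {A A' C C'} : SubP σ A' A → SubD σ C C' → SubP σ (.fn A C) (.fn A' C')
  | eff {E R R'} : R ⊆ R' → SubP σ (.eff E R) (.eff E R')
  | hand {C C' D D'} : SubD σ C' C → SubD σ D D' → SubP σ (.hand C D) (.hand C' D')
inductive SubD (σ : Sig) : DType σ → DType σ → Prop
  | bang {A A' Δ Δ'} : SubP σ A A' → Δ ⊆ Δ' → SubD σ (.bang A Δ) (.bang A' Δ')
end

/- The effect system of core Eff: typing of expressions, operation cases
(`Γ ⊢ ocs : C / Δ`) and computations, with subsumption. -/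
mutual
inductive HasTypeE (σ : Sig) (Ω : OpSig σ) [DecidableEq σ.Inst] [DecidableEq σ.Op] :
    List (PType σ) → Expr σ → PType σ → Prop
  | var {Γ n A} : Γ[n]? = some A → HasTypeE σ Ω Γ (.var n) A
  | tt {Γ} : HasTypeE σ Ω Γ .tt .bool
  | ff {Γ} : HasTypeE σ Ω Γ .ff .bool
  | zero {Γ} : HasTypeE σ Ω Γ .zero .nat
  | succ {Γ e} : HasTypeE σ Ω Γ e .nat → HasTypeE σ Ω Γ (.succ e) .nat
  | unit {Γ} : HasTypeE σ Ω Γ .unit .unit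
  | fn {Γ A c C} : HasTypeC σ Ω (A :: Γ) c C → HasTypeE σ Ω Γ (.fn A c) (.fn A C)
  | inst {Γ ι E R} : ι ∈ R → (∀ κ ∈ R, Ω.instOf κ = E) →
      HasTypeE σ Ω Γ (.inst ι) (.eff E R)
  | handler {Γ A cv ocs B Δ Δ' Δ''} :
      HasTypeC σ Ω (A :: Γ) cv (.bang B Δ') →
      HasTypeO σ Ω Γ ocs (.bang B Δ') Δ'' →
      Δ ⊆ Δ'' ∪ Δ' →
      HasTypeE σ Ω Γ (.handler A cv ocs) (.hand (.bang A Δ) (.bang B Δ'))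
  | sub {Γ e A A'} : HasTypeE σ Ω Γ e A → SubP σ A A' → HasTypeE σ Ω Γ e A'
inductive HasTypeO (σ : Sig) (Ω : OpSig σ) [DecidableEq σ.Inst] [DecidableEq σ.Op] :
    List (PType σ) → OpCases σ → DType σ → Finset (σ.Inst × σ.Op) → Prop
  | nil {Γ C} : HasTypeO σ Ω Γ (.nil C) C ∅
  | cons {Γ e op c ocs E R C Δ Δ'} :
      HasTypeE σ Ω Γ e (.eff E R) →
      Ω.opOf op = E →
      HasTypeC σ Ω (.fn (Ω.res op) C :: Ω.par op :: Γ) c C →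
      HasTypeO σ Ω Γ ocs C Δ' →
      (∀ ι, R = {ι} → Δ ⊆ insert (ι, op) Δ') →
      ((¬ ∃ ι, R = {ι}) → Δ ⊆ Δ') →
      HasTypeO σ Ω Γ (.cons e op c ocs) C Δ
inductive HasTypeC (σ : Sig) (Ω : OpSig σ) [DecidableEq σ.Inst] [DecidableEq σ.Op] :
    List (PType σ) → Comp σ → DType σ → Prop
  | ret {Γ e A Δ} : HasTypeE σ Ω Γ e A → HasTypeC σ Ω Γ (.ret e) (.bang A Δ)
  | call {Γ e1 op e2 c E R A Δ} :
      HasTypeE σ Ω Γ e1 (.eff E R) →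
      Ω.opOf op = E →
      HasTypeE σ Ω Γ e2 (Ω.par op) →
      HasTypeC σ Ω (Ω.res op :: Γ) c (.bang A Δ) →
      (∀ ι ∈ R, (ι, op) ∈ Δ) →
      HasTypeC σ Ω Γ (.call e1 op e2 c) (.bang A Δ)
  | handle {Γ e c C D} : HasTypeE σ Ω Γ e (.hand C D) → HasTypeC σ Ω Γ c C →
      HasTypeC σ Ω Γ (.handle e c) D
  | ite {Γ e c1 c2 C} : HasTypeE σ Ω Γ e .bool → HasTypeC σ Ω Γ c1 C →
      HasTypeC σ Ω Γ c2 C → HasTypeC σ Ω Γ (.ite e c1 c2) C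
  | case {Γ e c1 c2 C} : HasTypeE σ Ω Γ e .nat → HasTypeC σ Ω Γ c1 C →
      HasTypeC σ Ω (.nat :: Γ) c2 C → HasTypeC σ Ω Γ (.case e c1 c2) C
  | absurd {Γ e C} : HasTypeE σ Ω Γ e .empty → HasTypeC σ Ω Γ (.absurd C e) C
  | app {Γ e1 e2 A C} : HasTypeE σ Ω Γ e1 (.fn A C) → HasTypeE σ Ω Γ e2 A →
      HasTypeC σ Ω Γ (.app e1 e2) C
  | letin {Γ c1 c2 A B Δ} : HasTypeC σ Ω Γ c1 (.bang A Δ) →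
      HasTypeC σ Ω (A :: Γ) c2 (.bang B Δ) →
      HasTypeC σ Ω Γ (.letin c1 c2) (.bang B Δ)
  | letrec {Γ A C c1 c2 D} :
      HasTypeC σ Ω (A :: .fn A C :: Γ) c1 C →
      HasTypeC σ Ω (.fn A C :: Γ) c2 D →
      HasTypeC σ Ω Γ (.letrec A C c1 c2) D
  | sub {Γ c C C'} : HasTypeC σ Ω Γ c C → SubD σ C C' → HasTypeC σ Ω Γ c C'
end

/-- Skeletal types: pure/dirty types with all effect information erased. -/
inductive SType (σ : Sig) : Type
  | bool : SType σ
  | nat : SType σ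
  | unit : SType σ
  | empty : SType σ
  | fn : SType σ → SType σ → SType σ
  | eff : σ.Effect → SType σ
  | hand : SType σ → SType σ → SType σ

/- Skeletal erasure of pure and dirty types. -/
mutual
def skelP : PType σ → SType σ
  | .bool => .bool
  | .nat => .nat
  | .unit => .unit
  | .empty => .empty
  | .fn A C => .fn (skelP A) (skelD C)
  | .eff E _ => .eff E
  | .hand C D => .hand (skelD C) (skelD D)
def skelD : DType σ → SType σ
  | .bang A _ => skelP A
end

/- The skeletal type system: the rules of core Eff with all effect
information erased and without subsumption. -/
mutual
inductive SHasTypeE (σ : Sig) (Ω : OpSig σ) :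
    List (SType σ) → Expr σ → SType σ → Prop
  | var {Γ n S} : Γ[n]? = some S → SHasTypeE σ Ω Γ (.var n) S
  | tt {Γ} : SHasTypeE σ Ω Γ .tt .bool
  | ff {Γ} : SHasTypeE σ Ω Γ .ff .bool
  | zero {Γ} : SHasTypeE σ Ω Γ .zero .nat
  | succ {Γ e} : SHasTypeE σ Ω Γ e .nat → SHasTypeE σ Ω Γ (.succ e) .nat
  | unit {Γ} : SHasTypeE σ Ω Γ .unit .unit
  | fn {Γ A c T} : SHasTypeC σ Ω (skelP A :: Γ) c T →
      SHasTypeE σ Ω Γ (.fn A c) (.fn (skelP A) T)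
  | inst {Γ ι} : SHasTypeE σ Ω Γ (.inst ι) (.eff (Ω.instOf ι))
  | handler {Γ A cv ocs T} :
      SHasTypeC σ Ω (skelP A :: Γ) cv T →
      SHasTypeO σ Ω Γ ocs T →
      SHasTypeE σ Ω Γ (.handler A cv ocs) (.hand (skelP A) T)
inductive SHasTypeO (σ : Sig) (Ω : OpSig σ) :
    List (SType σ) → OpCases σ → SType σ → Prop
  | nil {Γ C} : SHasTypeO σ Ω Γ (.nil C) (skelD C)
  | cons {Γ e op c ocs T} :
      SHasTypeE σ Ω Γ e (.eff (Ω.opOf op)) →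
      SHasTypeC σ Ω (.fn (skelP (Ω.res op)) T :: skelP (Ω.par op) :: Γ) c T →
      SHasTypeO σ Ω Γ ocs T →
      SHasTypeO σ Ω Γ (.cons e op c ocs) T
inductive SHasTypeC (σ : Sig) (Ω : OpSig σ) :
    List (SType σ) → Comp σ → SType σ → Prop
  | ret {Γ e S} : SHasTypeE σ Ω Γ e S → SHasTypeC σ Ω Γ (.ret e) S
  | call {Γ e1 op e2 c T} :
      SHasTypeE σ Ω Γ e1 (.eff (Ω.opOf op)) →
      SHasTypeE σ Ω Γ e2 (skelP (Ω.par op)) →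
      SHasTypeC σ Ω (skelP (Ω.res op) :: Γ) c T →
      SHasTypeC σ Ω Γ (.call e1 op e2 c) T
  | handle {Γ e c S T} : SHasTypeE σ Ω Γ e (.hand S T) → SHasTypeC σ Ω Γ c S →
      SHasTypeC σ Ω Γ (.handle e c) T
  | ite {Γ e c1 c2 T} : SHasTypeE σ Ω Γ e .bool → SHasTypeC σ Ω Γ c1 T →
      SHasTypeC σ Ω Γ c2 T → SHasTypeC σ Ω Γ (.ite e c1 c2) T
  | case {Γ e c1 c2 T} : SHasTypeE σ Ω Γ e .nat → SHasTypeC σ Ω Γ c1 T →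
      SHasTypeC σ Ω (.nat :: Γ) c2 T → SHasTypeC σ Ω Γ (.case e c1 c2) T
  | absurd {Γ e C} : SHasTypeE σ Ω Γ e .empty → SHasTypeC σ Ω Γ (.absurd C e) (skelD C)
  | app {Γ e1 e2 S T} : SHasTypeE σ Ω Γ e1 (.fn S T) → SHasTypeE σ Ω Γ e2 S →
      SHasTypeC σ Ω Γ (.app e1 e2) T
  | letin {Γ c1 c2 S T} : SHasTypeC σ Ω Γ c1 S → SHasTypeC σ Ω (S :: Γ) c2 T →
      SHasTypeC σ Ω Γ (.letin c1 c2) T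
  | letrec {Γ A C c1 c2 T} :
      SHasTypeC σ Ω (skelP A :: .fn (skelP A) (skelD C) :: Γ) c1 (skelD C) →
      SHasTypeC σ Ω (.fn (skelP A) (skelD C) :: Γ) c2 T →
      SHasTypeC σ Ω Γ (.letrec A C c1 c2) T
end

end CoreEff

/-!
Type soundness by progress and preservation. Canonical forms say that a closed
expression of type `E^R` is an instance `ι ∈ R`, so a closed computation
`ι#op e (y.c)` of dirty type `A ! Δ` has `ι#op ∈ Δ`; with `Δ = ∅` progress thus
leaves only steps and values, and preservation carries the typing along `⇝*`.
The one delicate case of preservation is handler dispatch: an operation case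
that is skipped for `ι#op` hands the obligation `ι#op` on to the remaining cases.
-/

namespace CoreEff

variable {σ : Sig}

mutual
theorem SubP.refl : ∀ A : PType σ, SubP σ A A
  | .bool => .bool
  | .nat => .nat
  | .unit => .unit
  | .empty => .empty
  | .fn A C => .fn (SubP.refl A) (SubD.refl C)
  | .eff _ _ => .eff subset_rfl
  | .hand C D => .hand (SubD.refl C) (SubD.refl D)
theorem SubD.refl : ∀ C : DType σ, SubD σ C C
  | .bang A _ => .bang (SubP.refl A) subset_rfl
end

mutual
theorem SubP.trans : ∀ {A B C : PType σ}, SubP σ A B → SubP σ B C → SubP σ A C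
  | _, _, _, .bool, .bool => .bool
  | _, _, _, .nat, .nat => .nat
  | _, _, _, .unit, .unit => .unit
  | _, _, _, .empty, .empty => .empty
  | _, _, _, .fn h1 h2, .fn h3 h4 => .fn (h3.trans h1) (h2.trans h4)
  | _, _, _, .eff h1, .eff h2 => .eff (h1.trans h2)
  | _, _, _, .hand h1 h2, .hand h3 h4 => .hand (h3.trans h1) (h2.trans h4)
theorem SubD.trans : ∀ {A B C : DType σ}, SubD σ A B → SubD σ B C → SubD σ A C
  | _, _, _, .bang h1 h2, .bang h3 h4 => .bang (h1.trans h3) (h2.trans h4)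
end

def IsRenaming (ξ : Nat → Nat) (Γ Γ' : List (PType σ)) : Prop :=
  ∀ n A, Γ[n]? = some A → Γ'[ξ n]? = some A

theorem IsRenaming.lift {ξ : Nat → Nat} {Γ Γ' : List (PType σ)} (hξ : IsRenaming ξ Γ Γ')
    (A : PType σ) : IsRenaming (liftRen ξ) (A :: Γ) (A :: Γ')
  | 0, _, h => h
  | n + 1, B, h => hξ n B h

theorem IsRenaming.succ (Γ : List (PType σ)) (A : PType σ) : IsRenaming Nat.succ Γ (A :: Γ) :=
  fun _ _ h => h

theorem IsRenaming.swap01 (Γ : List (PType σ)) (A B : PType σ) :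
    IsRenaming swap01 (A :: B :: Γ) (B :: A :: Γ)
  | 0, _, h => h
  | 1, _, h => h
  | _ + 2, _, h => h

theorem Dispatch.exists (ι : σ.Inst) (op : σ.Op) (e κ : Expr σ) :
    ∀ ocs : OpCases σ, ∃ c, Dispatch ocs ι op e κ c
  | .nil _ => ⟨_, .nil⟩
  | .cons e' op' _ ocs => by
    by_cases h : Expr.inst ι = e' ∧ op = op'
    · obtain ⟨rfl, rfl⟩ := h
      exact ⟨_, .found⟩
    · obtain ⟨c, hd⟩ := Dispatch.exists ι op e κ ocs
      exact ⟨c, .skip (not_and_or.mp h) hd⟩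

variable {Ω : OpSig σ} [DecidableEq σ.Inst] [DecidableEq σ.Op]

section Substitution

mutual
theorem HasTypeE.rename {Γ e A} : HasTypeE σ Ω Γ e A →
    ∀ {ξ Γ'}, IsRenaming ξ Γ Γ' → HasTypeE σ Ω Γ' (renameE ξ e) A
  | .var h, _, _, hξ => .var (hξ _ _ h)
  | .tt, _, _, _ => .tt
  | .ff, _, _, _ => .ff
  | .zero, _, _, _ => .zero
  | .succ h, _, _, hξ => .succ (h.rename hξ)
  | .unit, _, _, _ => .unit
  | .fn h, _, _, hξ => .fn (h.rename (hξ.lift _))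
  | .inst h1 h2, _, _, _ => .inst h1 h2
  | .handler h1 h2 h3, _, _, hξ => .handler (h1.rename (hξ.lift _)) (h2.rename hξ) h3
  | .sub h hs, _, _, hξ => .sub (h.rename hξ) hs
theorem HasTypeO.rename {Γ ocs C Δ} : HasTypeO σ Ω Γ ocs C Δ →
    ∀ {ξ Γ'}, IsRenaming ξ Γ Γ' → HasTypeO σ Ω Γ' (renameO ξ ocs) C Δ
  | .nil, _, _, _ => .nil
  | .cons h1 h2 h3 h4 h5 h6, _, _, hξ =>
      .cons (h1.rename hξ) h2 (h3.rename ((hξ.lift _).lift _)) (h4.rename hξ) h5 h6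
theorem HasTypeC.rename {Γ c C} : HasTypeC σ Ω Γ c C →
    ∀ {ξ Γ'}, IsRenaming ξ Γ Γ' → HasTypeC σ Ω Γ' (renameC ξ c) C
  | .ret h, _, _, hξ => .ret (h.rename hξ)
  | .call h1 h2 h3 h4 h5, _, _, hξ =>
      .call (h1.rename hξ) h2 (h3.rename hξ) (h4.rename (hξ.lift _)) h5
  | .handle h1 h2, _, _, hξ => .handle (h1.rename hξ) (h2.rename hξ)
  | .ite h1 h2 h3, _, _, hξ => .ite (h1.rename hξ) (h2.rename hξ) (h3.rename hξ)
  | .case h1 h2 h3, _, _, hξ => .case (h1.rename hξ) (h2.rename hξ) (h3.rename (hξ.lift _))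
  | .absurd h, _, _, hξ => .absurd (h.rename hξ)
  | .app h1 h2, _, _, hξ => .app (h1.rename hξ) (h2.rename hξ)
  | .letin h1 h2, _, _, hξ => .letin (h1.rename hξ) (h2.rename (hξ.lift _))
  | .letrec h1 h2, _, _, hξ =>
      .letrec (h1.rename ((hξ.lift _).lift _)) (h2.rename (hξ.lift _))
  | .sub h hs, _, _, hξ => .sub (h.rename hξ) hs
end

theorem HasTypeE.shift {Γ e A} (h : HasTypeE σ Ω Γ e A) (B : PType σ) :
    HasTypeE σ Ω (B :: Γ) (shiftE e) A :=
  h.rename (IsRenaming.succ Γ B)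

variable (Ω) in
def IsSubst (s : Nat → Expr σ) (Γ Γ' : List (PType σ)) : Prop :=
  ∀ n A, Γ[n]? = some A → HasTypeE σ Ω Γ' (s n) A

theorem IsSubst.lift {s : Nat → Expr σ} {Γ Γ' : List (PType σ)} (hs : IsSubst Ω s Γ Γ')
    (A : PType σ) : IsSubst Ω (liftSub s) (A :: Γ) (A :: Γ')
  | 0, _, h => .var h
  | n + 1, B, h => (hs n B h).shift A

mutual
theorem HasTypeE.subst {Γ e A} : HasTypeE σ Ω Γ e A →
    ∀ {s Γ'}, IsSubst Ω s Γ Γ' → HasTypeE σ Ω Γ' (substE s e) A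
  | .var h, _, _, hs => hs _ _ h
  | .tt, _, _, _ => .tt
  | .ff, _, _, _ => .ff
  | .zero, _, _, _ => .zero
  | .succ h, _, _, hs => .succ (h.subst hs)
  | .unit, _, _, _ => .unit
  | .fn h, _, _, hs => .fn (h.subst (hs.lift _))
  | .inst h1 h2, _, _, _ => .inst h1 h2
  | .handler h1 h2 h3, _, _, hs => .handler (h1.subst (hs.lift _)) (h2.subst hs) h3
  | .sub h hA, _, _, hs => .sub (h.subst hs) hA
theorem HasTypeO.subst {Γ ocs C Δ} : HasTypeO σ Ω Γ ocs C Δ →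
    ∀ {s Γ'}, IsSubst Ω s Γ Γ' → HasTypeO σ Ω Γ' (substO s ocs) C Δ
  | .nil, _, _, _ => .nil
  | .cons h1 h2 h3 h4 h5 h6, _, _, hs =>
      .cons (h1.subst hs) h2 (h3.subst ((hs.lift _).lift _)) (h4.subst hs) h5 h6
theorem HasTypeC.subst {Γ c C} : HasTypeC σ Ω Γ c C →
    ∀ {s Γ'}, IsSubst Ω s Γ Γ' → HasTypeC σ Ω Γ' (substC s c) C
  | .ret h, _, _, hs => .ret (h.subst hs)
  | .call h1 h2 h3 h4 h5, _, _, hs =>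
      .call (h1.subst hs) h2 (h3.subst hs) (h4.subst (hs.lift _)) h5
  | .handle h1 h2, _, _, hs => .handle (h1.subst hs) (h2.subst hs)
  | .ite h1 h2 h3, _, _, hs => .ite (h1.subst hs) (h2.subst hs) (h3.subst hs)
  | .case h1 h2 h3, _, _, hs => .case (h1.subst hs) (h2.subst hs) (h3.subst (hs.lift _))
  | .absurd h, _, _, hs => .absurd (h.subst hs)
  | .app h1 h2, _, _, hs => .app (h1.subst hs) (h2.subst hs)
  | .letin h1 h2, _, _, hs => .letin (h1.subst hs) (h2.subst (hs.lift _))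
  | .letrec h1 h2, _, _, hs =>
      .letrec (h1.subst ((hs.lift _).lift _)) (h2.subst (hs.lift _))
  | .sub h hC, _, _, hs => .sub (h.subst hs) hC
end

theorem HasTypeC.subst0 {Γ c C A e} (h : HasTypeC σ Ω (A :: Γ) c C)
    (he : HasTypeE σ Ω Γ e A) : HasTypeC σ Ω Γ (subst0C e c) C :=
  h.subst fun
    | 0, _, hA => Option.some.inj hA ▸ he
    | _ + 1, _, hA => .var hA

theorem HasTypeC.subst2 {Γ c C A B e1 e0} (h : HasTypeC σ Ω (B :: A :: Γ) c C)
    (h1 : HasTypeE σ Ω Γ e1 A) (h0 : HasTypeE σ Ω Γ e0 B) :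
    HasTypeC σ Ω Γ (subst2C e1 e0 c) C :=
  h.subst fun
    | 0, _, hB => Option.some.inj hB ▸ h0
    | 1, _, hA => Option.some.inj hA ▸ h1
    | _ + 2, _, hA => .var hA

theorem HasTypeE.recUnfold {Γ A C c} (h : HasTypeC σ Ω (A :: .fn A C :: Γ) c C) :
    HasTypeE σ Ω Γ (recUnfold A C c) (.fn A C) :=
  .fn (.letrec (h.rename (((IsRenaming.succ _ _).lift _).lift _))
    (h.rename (IsRenaming.swap01 _ _ _)))

end Substitution

section Inversion

variable (Ω) in
/-- The premises of the syntax-directed typing rule for each computation former,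
with the subsumptions below it absorbed. -/
def InvC (Γ : List (PType σ)) : Comp σ → DType σ → Prop
  | .ret e, .bang A _ => HasTypeE σ Ω Γ e A
  | .call e1 op e2 c, .bang A Δ => ∃ E R, HasTypeE σ Ω Γ e1 (.eff E R) ∧ Ω.opOf op = E ∧
      HasTypeE σ Ω Γ e2 (Ω.par op) ∧ HasTypeC σ Ω (Ω.res op :: Γ) c (.bang A Δ) ∧
      ∀ ι ∈ R, (ι, op) ∈ Δ
  | .handle e c, D => ∃ C, HasTypeE σ Ω Γ e (.hand C D) ∧ HasTypeC σ Ω Γ c C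
  | .ite e c1 c2, C => HasTypeE σ Ω Γ e .bool ∧ HasTypeC σ Ω Γ c1 C ∧ HasTypeC σ Ω Γ c2 C
  | .case e c1 c2, C => HasTypeE σ Ω Γ e .nat ∧ HasTypeC σ Ω Γ c1 C ∧
      HasTypeC σ Ω (.nat :: Γ) c2 C
  | .absurd _ e, _ => HasTypeE σ Ω Γ e .empty
  | .app e1 e2, C => ∃ A, HasTypeE σ Ω Γ e1 (.fn A C) ∧ HasTypeE σ Ω Γ e2 A
  | .letin c1 c2, .bang B Δ => ∃ A, HasTypeC σ Ω Γ c1 (.bang A Δ) ∧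
      HasTypeC σ Ω (A :: Γ) c2 (.bang B Δ)
  | .letrec A C c1 c2, D => HasTypeC σ Ω (A :: .fn A C :: Γ) c1 C ∧
      HasTypeC σ Ω (.fn A C :: Γ) c2 D

theorem InvC.sub {Γ c C C'} (h : InvC Ω Γ c C) (hs : SubD σ C C') : InvC Ω Γ c C' := by
  obtain ⟨hA, hΔ⟩ := hs
  have hs : SubD σ _ _ := .bang hA hΔ
  cases c <;> simp only [InvC] at h ⊢
  case ret => exact h.sub hA
  case call =>
    obtain ⟨E, R, h1, h2, h3, h4, h5⟩ := h
    exact ⟨E, R, h1, h2, h3, h4.sub hs, fun ι hι => hΔ (h5 ι hι)⟩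
  case handle =>
    obtain ⟨C, h1, h2⟩ := h
    exact ⟨C, h1.sub (.hand (.refl _) hs), h2⟩
  case ite => exact ⟨h.1, h.2.1.sub hs, h.2.2.sub hs⟩
  case case => exact ⟨h.1, h.2.1.sub hs, h.2.2.sub hs⟩
  case absurd => exact h
  case app =>
    obtain ⟨B, h1, h2⟩ := h
    exact ⟨B, h1.sub (.fn (.refl _) hs), h2⟩
  case letin =>
    obtain ⟨B, h1, h2⟩ := h
    exact ⟨B, h1.sub (.bang (.refl _) hΔ), h2.sub hs⟩
  case letrec => exact ⟨h.1, h.2.sub hs⟩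

theorem HasTypeC.inv {Γ c C} : HasTypeC σ Ω Γ c C → InvC Ω Γ c C
  | .ret h => h
  | .call h1 h2 h3 h4 h5 => ⟨_, _, h1, h2, h3, h4, h5⟩
  | .handle h1 h2 => ⟨_, h1, h2⟩
  | .ite h1 h2 h3 => ⟨h1, h2, h3⟩
  | .case h1 h2 h3 => ⟨h1, h2, h3⟩
  | .absurd h => h
  | .app h1 h2 => ⟨_, h1, h2⟩
  | .letin h1 h2 => ⟨_, h1, h2⟩
  | .letrec h1 h2 => ⟨h1, h2⟩
  | .sub h hs => h.inv.sub hs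

variable (Ω) in
def Canonical : PType σ → Expr σ → Prop
  | .bool, e => e = .tt ∨ e = .ff
  | .nat, e => e = .zero ∨ ∃ e', e = .succ e' ∧ HasTypeE σ Ω [] e' .nat
  | .unit, _ => True
  | .empty, _ => False
  | .fn A C, e => ∃ A₀ c, e = .fn A₀ c ∧ HasTypeC σ Ω [A₀] c C ∧ SubP σ A A₀
  | .eff E R, e => ∃ ι, e = .inst ι ∧ ι ∈ R ∧ Ω.instOf ι = E
  | .hand C D, e => ∃ A cv ocs Δ B Δv Δo, e = .handler A cv ocs ∧
      HasTypeC σ Ω [A] cv (.bang B Δv) ∧ HasTypeO σ Ω [] ocs (.bang B Δv) Δo ∧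
      Δ ⊆ Δo ∪ Δv ∧ SubD σ C (.bang A Δ) ∧ SubD σ (.bang B Δv) D

theorem Canonical.sub {A A' e} (h : Canonical Ω A e) : SubP σ A A' → Canonical Ω A' e
  | .bool | .nat | .unit | .empty => h
  | .fn hA hC =>
    let ⟨A₀, c, he, hc, hs⟩ := h
    ⟨A₀, c, he, hc.sub hC, hA.trans hs⟩
  | .eff hR =>
    let ⟨ι, he, hι, hE⟩ := h
    ⟨ι, he, hR hι, hE⟩
  | .hand hC hD =>
    let ⟨A, cv, ocs, Δ, B, Δv, Δo, he, hcv, hocs, hΔ, hC', hD'⟩ := h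
    ⟨A, cv, ocs, Δ, B, Δv, Δo, he, hcv, hocs, hΔ, hC.trans hC', hD'.trans hD⟩

theorem HasTypeE.canonical {Γ e A} : HasTypeE σ Ω Γ e A → Γ = [] → Canonical Ω A e
  | .var h, hΓ => by simp [hΓ] at h
  | .tt, _ => .inl rfl
  | .ff, _ => .inr rfl
  | .zero, _ => .inl rfl
  | .succ h, hΓ => .inr ⟨_, rfl, hΓ ▸ h⟩
  | .unit, _ => trivial
  | .fn h, hΓ => ⟨_, _, rfl, hΓ ▸ h, .refl _⟩
  | .inst hι hR, _ => ⟨_, rfl, hι, hR _ hι⟩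
  | .handler hcv hocs hΔ, hΓ =>
    ⟨_, _, _, _, _, _, _, rfl, hΓ ▸ hcv, hΓ ▸ hocs, hΔ, .refl _, .refl _⟩
  | .sub h hs, hΓ => (h.canonical hΓ).sub hs

end Inversion

section Soundness

/- A case `e'#op' ↦ c` may drop `ι₀#op'` from the dirt only when `e'` has a
singleton region `{ι₀}`; closed, `e'` is then the instance `ι₀` itself. -/
theorem HasTypeO.cons_skip {e' op' c ocs C Δ ι op}
    (h : HasTypeO σ Ω [] (.cons e' op' c ocs) C Δ) (hne : Expr.inst ι ≠ e' ∨ op ≠ op') :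
    ∃ Δ', HasTypeO σ Ω [] ocs C Δ' ∧ ((ι, op) ∈ Δ → (ι, op) ∈ Δ') := by
  obtain _ | @⟨_, _, _, _, _, _, R, _, _, _, he', -, -, hocs, hsingle, hnonsingle⟩ := h
  refine ⟨_, hocs, fun hmem => ?_⟩
  by_cases hR : ∃ ι₀, R = {ι₀}
  · obtain ⟨ι₀, rfl⟩ := hR
    obtain ⟨ι₁, rfl, hι₁, -⟩ := he'.canonical rfl
    rw [Finset.mem_singleton] at hι₁
    subst hι₁
    rcases Finset.mem_insert.mp (hsingle ι₁ rfl hmem) with heq | hmem'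
    · cases heq
      simp at hne
    · exact hmem'
  · exact hnonsingle hR hmem

theorem Dispatch.hasType {ocs ι op e κ c} (hd : Dispatch ocs ι op e κ c) {B Δv Δo}
    (he : HasTypeE σ Ω [] e (Ω.par op)) (hκ : HasTypeE σ Ω [] κ (.fn (Ω.res op) (.bang B Δv)))
    (hι : Ω.instOf ι = Ω.opOf op) (hocs : HasTypeO σ Ω [] ocs (.bang B Δv) Δo)
    (hmem : (ι, op) ∈ Δo ∪ Δv) : HasTypeC σ Ω [] c (.bang B Δv) := by
  induction hd generalizing Δo with
  | @nil _ ι =>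
    cases hocs
    refine .call (R := {ι}) (.inst (Finset.mem_singleton_self ι) ?_) rfl he
      (.app (hκ.shift _) (.var rfl)) ?_
    · simpa using hι
    · simpa using hmem
  | found =>
    obtain _ | ⟨-, -, hc, -, -, -⟩ := hocs
    exact hc.subst2 he hκ
  | skip hne _ ih =>
    obtain ⟨Δ', hocs', hΔ'⟩ := hocs.cons_skip hne
    exact ih he hκ hι hocs' (Finset.mem_union.mpr ((Finset.mem_union.mp hmem).imp_left hΔ'))

theorem Dispatch.hasType_of_handle_call {A cv ocs ι op e k c D}
    (hd : Dispatch ocs ι op e (.fn (Ω.res op) (.handle (shiftE (.handler A cv ocs)) k)) c)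
    (h : HasTypeC σ Ω [] (.handle (.handler A cv ocs) (.call (.inst ι) op e k)) D) :
    HasTypeC σ Ω [] c D := by
  obtain ⟨_, hh, hc⟩ := h.inv
  obtain ⟨_, _, _, _, _, _, _, ⟨⟩, hcv, hocs, hΔ, hC, hD⟩ := hh.canonical rfl
  obtain ⟨_, _, hinst, hop, he, hk, hR⟩ := (hc.sub hC).inv
  obtain ⟨_, ⟨⟩, hι, hE⟩ := hinst.canonical rfl
  have hκ := HasTypeE.fn (.handle ((HasTypeE.handler hcv hocs hΔ).shift _) hk)
  exact (hd.hasType he hκ (hE.trans hop.symm) hocs (hΔ (hR _ hι))).sub hD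

theorem Step.preserves_hasType {c c'} (hs : Step Ω c c') :
    ∀ {C}, HasTypeC σ Ω [] c C → HasTypeC σ Ω [] c' C := by
  induction hs with
  | iteTrue => exact fun h => h.inv.2.1
  | iteFalse => exact fun h => h.inv.2.2
  | caseZero => exact fun h => h.inv.2.1
  | caseSucc =>
    intro _ h
    obtain ⟨hn, -, hc⟩ := h.inv
    obtain ⟨⟨⟩⟩ | ⟨_, ⟨⟩, he⟩ := hn.canonical rfl
    exact hc.subst0 he
  | app =>
    intro _ h
    obtain ⟨_, hf, he⟩ := h.inv
    obtain ⟨_, _, ⟨⟩, hc, hA⟩ := hf.canonical rfl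
    exact hc.subst0 (he.sub hA)
  | letCong _ ih =>
    rintro ⟨_, _⟩ h
    obtain ⟨_, h1, h2⟩ := h.inv
    exact .letin (ih h1) h2
  | letVal =>
    rintro ⟨_, _⟩ h
    obtain ⟨_, h1, h2⟩ := h.inv
    exact h2.subst0 h1.inv
  | letOp =>
    rintro ⟨_, _⟩ h
    obtain ⟨_, h1, h2⟩ := h.inv
    obtain ⟨_, _, hι, hop, he, hk, hR⟩ := h1.inv
    exact .call hι hop he (.letin hk (h2.rename ((IsRenaming.succ _ _).lift _))) hR
  | letrec =>
    intro _ h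
    obtain ⟨h1, h2⟩ := h.inv
    exact h2.subst0 (.recUnfold h1)
  | handleCong _ ih =>
    intro _ h
    obtain ⟨_, h1, h2⟩ := h.inv
    exact .handle h1 (ih h2)
  | handleVal =>
    intro _ h
    obtain ⟨_, hh, hc⟩ := h.inv
    obtain ⟨_, _, _, _, _, _, _, ⟨⟩, hcv, -, -, hC, hD⟩ := hh.canonical rfl
    exact (hcv.subst0 (hc.sub hC).inv).sub hD
  | handleOp hd => exact hd.hasType_of_handle_call
theorem HasTypeC.progress : ∀ {c : Comp σ} {A Δ}, HasTypeC σ Ω [] c (.bang A Δ) →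
    (∃ c', Step Ω c c') ∨ (∃ e, c = .ret e) ∨
      ∃ ι op e k, c = .call (.inst ι) op e k ∧ (ι, op) ∈ Δ
  | .ret _, _, _, _ => .inr (.inl ⟨_, rfl⟩)
  | .call .., _, _, h => by
    obtain ⟨_, _, hinst, -, -, -, hR⟩ := h.inv
    obtain ⟨ι, rfl, hι, -⟩ := hinst.canonical rfl
    exact .inr (.inr ⟨ι, _, _, _, rfl, hR ι hι⟩)
  | .handle .., _, _, h => by
    obtain ⟨⟨_, _⟩, hh, hc⟩ := h.inv
    obtain ⟨_, _, _, _, _, _, _, rfl, -⟩ := hh.canonical rfl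
    refine .inl ?_
    rcases hc.progress with ⟨c', hs⟩ | ⟨e, rfl⟩ | ⟨ι, op, e, k, rfl, -⟩
    · exact ⟨_, .handleCong hs⟩
    · exact ⟨_, .handleVal⟩
    · exact (Dispatch.exists ι op e _ _).imp fun _ => .handleOp
  | .ite .., _, _, h => by
    rcases h.inv.1.canonical rfl with rfl | rfl
    exacts [.inl ⟨_, .iteTrue⟩, .inl ⟨_, .iteFalse⟩]
  | .case .., _, _, h => by
    rcases h.inv.1.canonical rfl with rfl | ⟨_, rfl, -⟩
    exacts [.inl ⟨_, .caseZero⟩, .inl ⟨_, .caseSucc⟩]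
  | .absurd .., _, _, h => (h.inv.canonical rfl).elim
  | .app .., _, _, h => by
    obtain ⟨_, hf, -⟩ := h.inv
    obtain ⟨_, _, rfl, -⟩ := hf.canonical rfl
    exact .inl ⟨_, .app⟩
  | .letin .., _, _, h => by
    obtain ⟨_, h1, -⟩ := h.inv
    refine .inl ?_
    rcases h1.progress with ⟨c', hs⟩ | ⟨e, rfl⟩ | ⟨ι, op, e, k, rfl, -⟩
    exacts [⟨_, .letCong hs⟩, ⟨_, .letVal⟩, ⟨_, .letOp⟩]
  | .letrec .., _, _, _ => .inl ⟨_, .letrec⟩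

theorem HasTypeC.step_or_ret_of_pure {c A} (h : HasTypeC σ Ω [] c (.bang A ∅)) :
    (∃ c', Step Ω c c') ∨ ∃ e, c = .ret e ∧ HasTypeE σ Ω [] e A := by
  rcases h.progress with hs | ⟨e, rfl⟩ | ⟨_, _, _, _, -, hmem⟩
  · exact .inl hs
  · exact .inr ⟨e, rfl, h.inv⟩
  · exact (Finset.notMem_empty _ hmem).elim

theorem StarStep.ret_of_pure {c r} (hr : StarStep Ω c r) :
    ∀ {A}, HasTypeC σ Ω [] c (.bang A ∅) → ∃ e, r = .ret e ∧ HasTypeE σ Ω [] e A := by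
  induction hr with
  | ret => exact fun h => ⟨_, rfl, h.inv⟩
  | call =>
    intro A h
    obtain ⟨_, _, hinst, -, -, -, hR⟩ := h.inv
    obtain ⟨ι, -, hι, -⟩ := hinst.canonical rfl
    exact (Finset.notMem_empty _ (hR ι hι)).elim
  | step hs _ ih => exact fun h => ih (hs.preserves_hasType h)

end Soundness

end CoreEff

namespace CoreEff

/-- **Progress for pure computations.** If `⊢ c : A ! ∅` for a
closed computation `c`, then either `c` steps or `c = val e` with `⊢ e : A`;
in particular a terminating closed computation of type `A ! ∅` returns a
value of type `A` and calls no operations. -/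
theorem progress_pure {σ : Sig} (Ω : OpSig σ) [DecidableEq σ.Inst] [DecidableEq σ.Op]
    (c : Comp σ) (A : PType σ)
    (h : HasTypeC σ Ω [] c (.bang A (∅ : Finset (σ.Inst × σ.Op)))) :
    ((∃ c', Step Ω c c') ∨ (∃ e, c = .ret e ∧ HasTypeE σ Ω [] e A)) ∧
    (∀ r, StarStep Ω c r → ∃ e, r = .ret e ∧ HasTypeE σ Ω [] e A) :=
  ⟨h.step_or_ret_of_pure, fun _ hr => hr.ret_of_pure h⟩

end CoreEff
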